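/- Let (X,d) be a metric space and let S ⊆ X be a finite set of n points with n ≥ 3. Then there exists a proper bipartition S = R ∪ B such that mst(R) + mst(B) ≥ ((n−2)/(n−1)) · mst(S). -/

import Mathlib

open scoped Classical

/-- The length of a minimum spanning tree of a finite point set `S` in a metric space:
the infimum, over all trees with vertex set `S`, of the sum of distances over the edges. -/
noncomputable def mst {X : Type*} [MetricSpace X] (S : Finset X) : ℝ :=
  sInf {c : ℝ | ∃ G : SimpleGraph S, G.IsTree ∧
    c = ∑ᶠ e ∈ G.edgeSet,
      Sym2.lift ⟨fun (u v : S) => dist (u : X) (v : X), fun _ _ => dist_comm _ _⟩ e}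

/-!
Let `u, v` be a closest pair of `S`, at distance `δ`, and take `R = {u}`, `B = S \ {u}`.
Every edge of a spanning tree of `S` has length at least `δ`, so `(n - 1) δ ≤ mst S`.
Hanging `u` on `v` turns any spanning tree of `B` into one of `S`, so `mst S ≤ mst B + δ`.
Hence `mst R + mst B ≥ mst S - δ ≥ (1 - 1/(n - 1)) mst S`.
-/

open SimpleGraph Finset

section EdgeLength

variable {V W X : Type*} [PseudoMetricSpace X]

noncomputable def edgeDist (f : V → X) : Sym2 V → ℝ :=
  Sym2.lift ⟨fun u v => dist (f u) (f v), fun _ _ => dist_comm _ _⟩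

@[simp]
lemma edgeDist_mk (f : V → X) (u v : V) : edgeDist f s(u, v) = dist (f u) (f v) := rfl

lemma edgeDist_nonneg (f : V → X) (e : Sym2 V) : 0 ≤ edgeDist f e :=
  e.ind fun _ _ => dist_nonneg

-- `mst S` is, definitionally, the infimum of `edgeLength Subtype.val` over the spanning trees of `S`.
noncomputable def edgeLength (f : V → X) (G : SimpleGraph V) : ℝ :=
  ∑ᶠ e ∈ G.edgeSet, edgeDist f e

lemma finsum_mem_edgeDist_nonneg (f : V → X) (s : Set (Sym2 V)) :
    0 ≤ ∑ᶠ e ∈ s, edgeDist f e :=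
  finsum_nonneg fun e => finsum_nonneg fun _ => edgeDist_nonneg f e

lemma edgeLength_nonneg (f : V → X) (G : SimpleGraph V) : 0 ≤ edgeLength f G :=
  finsum_mem_edgeDist_nonneg f _

@[simp]
lemma edgeLength_bot (f : V → X) : edgeLength f (⊥ : SimpleGraph V) = 0 := by
  simp [edgeLength]

lemma edgeLength_edge (f : V → X) (u v : V) : edgeLength f (edge u v) = dist (f u) (f v) := by
  rcases eq_or_ne u v with rfl | huv
  · simp [edge_self_eq_bot]
  · rw [edgeLength, edgeSet_edge_of_ne huv, finsum_mem_singleton, edgeDist_mk]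

lemma edgeLength_map (f : W → X) (ι : V ↪ W) (G : SimpleGraph V) :
    edgeLength f (G.map ι) = edgeLength (f ∘ ι) G := by
  rw [edgeLength, edgeSet_map, finsum_mem_image ι.sym2Map.injective.injOn]
  exact finsum_mem_congr rfl fun e _ => e.ind fun _ _ => rfl

lemma card_sub_one_mul_le_edgeLength_of_isTree [Fintype V] {G : SimpleGraph V} (hG : G.IsTree)
    (f : V → X) {δ : ℝ} (hδ : ∀ a b, G.Adj a b → δ ≤ dist (f a) (f b)) :
    ((Fintype.card V : ℝ) - 1) * δ ≤ edgeLength f G := by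
  have hcard : (#G.edgeFinset : ℝ) = (Fintype.card V : ℝ) - 1 := by
    rw [← hG.card_edgeFinset]
    push_cast
    ring
  rw [edgeLength, ← coe_edgeFinset, finsum_mem_coe_finset, ← hcard, ← nsmul_eq_mul]
  refine card_nsmul_le_sum _ _ _ fun e he => ?_
  induction e using Sym2.ind with
  | h a b => exact hδ a b (mem_edgeFinset.1 he)

variable [Finite V]

lemma edgeLength_mono (f : V → X) {G H : SimpleGraph V} (h : G ≤ H) :
    edgeLength f G ≤ edgeLength f H := by
  rw [edgeLength, edgeLength, ← Set.union_sdiff_cancel (edgeSet_mono h),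
    finsum_mem_union Set.disjoint_sdiff_right (Set.toFinite _) (Set.toFinite _)]
  exact le_add_of_nonneg_right (finsum_mem_edgeDist_nonneg f _)

lemma edgeLength_sup_le (f : V → X) (G H : SimpleGraph V) :
    edgeLength f (G ⊔ H) ≤ edgeLength f G + edgeLength f H := by
  rw [edgeLength, edgeLength, edgeLength, edgeSet_sup,
    ← finsum_mem_union_inter (Set.toFinite _) (Set.toFinite _)]
  exact le_add_of_nonneg_right (finsum_mem_edgeDist_nonneg f _)

end EdgeLength

section MST

variable {X : Type*} [MetricSpace X]

lemma mst_le_edgeLength_of_isTree {S : Finset X} {G : SimpleGraph S} (hG : G.IsTree) :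
    mst S ≤ edgeLength Subtype.val G :=
  csInf_le ⟨0, by rintro _ ⟨G, -, rfl⟩; exact edgeLength_nonneg _ G⟩ ⟨G, hG, rfl⟩

lemma le_mst {S : Finset X} (hS : S.Nonempty) {c : ℝ}
    (h : ∀ G : SimpleGraph S, G.IsTree → c ≤ edgeLength Subtype.val G) : c ≤ mst S := by
  have : Nonempty S := hS.to_subtype
  obtain ⟨T, -, hT⟩ := (connected_top (V := S)).exists_isTree_le
  exact le_csInf ⟨_, T, hT, rfl⟩ (by rintro _ ⟨G, hG, rfl⟩; exact h G hG)

lemma mst_nonneg (S : Finset X) : 0 ≤ mst S :=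
  Real.sInf_nonneg (by rintro _ ⟨G, -, rfl⟩; exact edgeLength_nonneg _ G)

lemma mst_le_edgeLength_of_connected {S : Finset X} {G : SimpleGraph S} (hG : G.Connected) :
    mst S ≤ edgeLength Subtype.val G := by
  obtain ⟨T, hTG, hT⟩ := hG.exists_isTree_le
  exact (mst_le_edgeLength_of_isTree hT).trans (edgeLength_mono _ hTG)

@[simp]
lemma mst_singleton (x : X) : mst {x} = 0 :=
  le_antisymm
    (by simpa using mst_le_edgeLength_of_isTree (S := ({x} : Finset X)) (G := ⊥) .of_subsingleton)
    (mst_nonneg _)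

lemma card_sub_one_mul_infsep_le_mst (S : Finset X) :
    ((#S : ℝ) - 1) * (S : Set X).infsep ≤ mst S := by
  rcases S.eq_empty_or_nonempty with rfl | hS
  · simpa [Set.infsep_empty] using mst_nonneg (∅ : Finset X)
  refine le_mst hS fun G hG => ?_
  simpa using card_sub_one_mul_le_edgeLength_of_isTree hG Subtype.val fun a b hab =>
    Set.infsep_le_dist_of_mem a.2 b.2 (Subtype.coe_ne_coe.2 hab.ne)

lemma mst_insert_le {B : Finset X} {v : X} (hv : v ∈ B) (u : X) :
    mst (insert u B) ≤ mst B + dist u v := by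
  let ι : B ↪ (insert u B : Finset X) := Subtype.impEmbedding _ _ fun _ => mem_insert_of_mem
  let u' : (insert u B : Finset X) := ⟨u, mem_insert_self u B⟩
  let v' : (insert u B : Finset X) := ⟨v, mem_insert_of_mem hv⟩
  suffices h : ∀ T : SimpleGraph B, T.IsTree →
      mst (insert u B) - dist u v ≤ edgeLength Subtype.val T by
    linarith [le_mst ⟨v, hv⟩ h]
  intro T hT
  -- hang `u` on `v` as a leaf of `T`
  have hconn : (T.map ι ⊔ edge u' v').Connected := by
    refine (connected_iff_exists_forall_reachable _).2 ⟨v', fun ⟨w, hw⟩ => ?_⟩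
    by_cases hwB : w ∈ B
    · exact (hT.connected.preconnected ⟨v, hv⟩ ⟨w, hwB⟩).map
        ((Hom.ofLE le_sup_left).comp (Embedding.map ι T).toHom)
    · obtain rfl : w = u := (mem_insert.1 hw).resolve_right hwB
      refine Adj.reachable (Or.inr ((edge_adj ..).2 ⟨Or.inr ⟨rfl, rfl⟩, ?_⟩))
      intro h
      simp only [v', Subtype.mk.injEq] at h
      exact hwB (h ▸ hv)
  have := (mst_le_edgeLength_of_connected hconn).trans (edgeLength_sup_le _ _ _)
  rw [edgeLength_map, edgeLength_edge] at this
  change _ ≤ edgeLength Subtype.val T + dist u v at this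
  linarith

end MST

theorem exists_bipartition_mst_ratio_ge {X : Type*} [MetricSpace X] (S : Finset X)
    (hn : 3 ≤ S.card) :
    ∃ R B : Finset X, R.Nonempty ∧ B.Nonempty ∧ Disjoint R B ∧ R ∪ B = S ∧
      ((S.card : ℝ) - 2) / ((S.card : ℝ) - 1) * mst S ≤ mst R + mst B := by
  obtain ⟨u, hu, v, hv, huv, hδ⟩ :=
    S.finite_toSet.infsep_exists_of_nontrivial (one_lt_card_iff_nontrivial.1 (by omega))
  have hvB : v ∈ S.erase u := mem_erase.2 ⟨huv.symm, hv⟩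
  refine ⟨{u}, S.erase u, singleton_nonempty u, ⟨v, hvB⟩,
    disjoint_singleton_left.2 (notMem_erase u S), by rw [← insert_eq, insert_erase hu], ?_⟩
  have hlower := card_sub_one_mul_infsep_le_mst S
  rw [hδ] at hlower
  have hupper := mst_insert_le hvB u
  rw [insert_erase hu] at hupper
  have hcard : (3 : ℝ) ≤ #S := by exact_mod_cast hn
  rw [mst_singleton, zero_add, div_mul_eq_mul_div, div_le_iff₀ (by linarith)]
  nlinarith [mst_nonneg S]
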